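/- arXiv:2605.23149 — 5 statements merged into one kernel-verified Lean document; each statement's English description precedes it below -/
import Mathlib

section
/- The equation 1 = θ/sin²θ − cos θ/sin θ has a unique solution θ_max in the open interval (0, π/2). -/
/-! Multiplying by `sin² θ`, the equation becomes `g θ = 0` with `g θ = θ - sin θ cos θ - sin² θ`.
Since `g' θ = 2 sin θ (sin θ - cos θ)`, `g` decreases on `[0, π/4]` and increases on `[π/4, π/2]`.
As `g 0 = 0`, `g` has no zero in `(0, π/4]`, while `g (π/4) = π/4 - 1 < 0 < π/2 - 1 = g (π/2)`
gives exactly one zero in `(π/4, π/2)`. -/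

open Real Set

noncomputable def thetaMaxDefect (θ : ℝ) : ℝ := θ - sin θ * cos θ - sin θ ^ 2

theorem one_eq_div_sin_sq_sub_cot_iff {θ : ℝ} (hθ : sin θ ≠ 0) :
    1 = θ / sin θ ^ 2 - cos θ / sin θ ↔ thetaMaxDefect θ = 0 := by
  have h : thetaMaxDefect θ = sin θ ^ 2 * (θ / sin θ ^ 2 - cos θ / sin θ - 1) := by
    unfold thetaMaxDefect; field_simp
  rw [h, mul_eq_zero, sub_eq_zero, eq_comm, or_iff_right (pow_ne_zero 2 hθ)]

theorem hasDerivAt_thetaMaxDefect (θ : ℝ) :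
    HasDerivAt thetaMaxDefect (2 * sin θ * (sin θ - cos θ)) θ := by
  refine (((hasDerivAt_id θ).sub ((hasDerivAt_sin θ).mul (hasDerivAt_cos θ))).sub
    ((hasDerivAt_sin θ).pow 2)).congr_deriv ?_
  simp only [Nat.cast_ofNat]
  linear_combination -sin_sq_add_cos_sq θ

theorem continuous_thetaMaxDefect : Continuous thetaMaxDefect := by
  unfold thetaMaxDefect; fun_prop

theorem sin_lt_cos_of_lt_pi_div_four {θ : ℝ} (h₀ : 0 ≤ θ) (h : θ < π / 4) : sin θ < cos θ := by
  rw [← sin_pi_div_two_sub]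
  exact strictMonoOn_sin ⟨by linarith, by linarith⟩ ⟨by linarith, by linarith [pi_pos]⟩
    (by linarith)

theorem cos_lt_sin_of_pi_div_four_lt {θ : ℝ} (h : π / 4 < θ) (h₁ : θ ≤ π / 2) : cos θ < sin θ := by
  rw [← sin_pi_div_two_sub]
  exact strictMonoOn_sin ⟨by linarith, by linarith⟩ ⟨by linarith [pi_pos], h₁⟩ (by linarith)

theorem strictAntiOn_thetaMaxDefect : StrictAntiOn thetaMaxDefect (Icc 0 (π / 4)) := by
  refine strictAntiOn_of_deriv_neg (convex_Icc _ _) continuous_thetaMaxDefect.continuousOn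
    fun θ hθ => ?_
  rw [interior_Icc] at hθ
  rw [(hasDerivAt_thetaMaxDefect θ).deriv]
  have hsin : 0 < sin θ := sin_pos_of_pos_of_lt_pi hθ.1 (by linarith [hθ.2, pi_pos])
  have hcos := sin_lt_cos_of_lt_pi_div_four hθ.1.le hθ.2
  nlinarith

theorem strictMonoOn_thetaMaxDefect : StrictMonoOn thetaMaxDefect (Icc (π / 4) (π / 2)) := by
  refine strictMonoOn_of_deriv_pos (convex_Icc _ _) continuous_thetaMaxDefect.continuousOn
    fun θ hθ => ?_
  rw [interior_Icc] at hθ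
  rw [(hasDerivAt_thetaMaxDefect θ).deriv]
  have hsin : 0 < sin θ :=
    sin_pos_of_pos_of_lt_pi (by linarith [hθ.1, pi_pos]) (by linarith [hθ.2, pi_pos])
  have hcos := cos_lt_sin_of_pi_div_four_lt hθ.1 hθ.2.le
  nlinarith

theorem thetaMaxDefect_neg {θ : ℝ} (hθ : θ ∈ Ioc 0 (π / 4)) : thetaMaxDefect θ < 0 := by
  have h := strictAntiOn_thetaMaxDefect ⟨le_rfl, by linarith [pi_pos]⟩ ⟨hθ.1.le, hθ.2⟩ hθ.1
  simpa [thetaMaxDefect] using h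

theorem thetaMaxDefect_pi_div_four : thetaMaxDefect (π / 4) = π / 4 - 1 := by
  have h : sin (π / 4) ^ 2 = 1 / 2 := by
    rw [sin_pi_div_four, div_pow, sq_sqrt zero_le_two]; norm_num
  rw [thetaMaxDefect, cos_pi_div_four, ← sin_pi_div_four, ← sq, h]; ring

theorem thetaMaxDefect_pi_div_two : thetaMaxDefect (π / 2) = π / 2 - 1 := by
  simp [thetaMaxDefect]

theorem existsUnique_thetaMaxDefect_eq_zero :
    ∃! θ : ℝ, θ ∈ Ioo 0 (π / 2) ∧ thetaMaxDefect θ = 0 := by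
  have roots_mem : ∀ θ ∈ Ioo 0 (π / 2), thetaMaxDefect θ = 0 → θ ∈ Icc (π / 4) (π / 2) :=
    fun θ hθ hroot => ⟨not_lt.mp fun h => (thetaMaxDefect_neg ⟨hθ.1, h.le⟩).ne hroot, hθ.2.le⟩
  obtain ⟨θ, hθ, hroot⟩ := intermediate_value_Ioo (a := π / 4) (b := π / 2)
    (by linarith [pi_pos]) continuous_thetaMaxDefect.continuousOn (show (0 : ℝ) ∈ Ioo _ _ by
      rw [thetaMaxDefect_pi_div_four, thetaMaxDefect_pi_div_two]
      constructor <;> linarith [pi_lt_four, pi_gt_three])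
  have hθ' : θ ∈ Ioo 0 (π / 2) := ⟨by linarith [hθ.1, pi_pos], hθ.2⟩
  refine ⟨θ, ⟨hθ', hroot⟩, fun η ⟨hη, hηroot⟩ => ?_⟩
  exact strictMonoOn_thetaMaxDefect.injOn (roots_mem η hη hηroot) (roots_mem θ hθ' hroot)
    (hηroot.trans hroot.symm)

theorem stmt_3 : ∃! θmax : ℝ, θmax ∈ Set.Ioo 0 (π/2) ∧
    1 = θmax / (Real.sin θmax)^2 - Real.cos θmax / Real.sin θmax := by
  refine (existsUnique_congr fun θ => and_congr_right fun hθ => ?_).mpr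
    existsUnique_thetaMaxDefect_eq_zero
  exact one_eq_div_sin_sq_sub_cot_iff
    (sin_pos_of_pos_of_lt_pi hθ.1 (by linarith [hθ.2, pi_pos])).ne'
end

section
/- Fix a ∈ [0,1) and let θ_max ∈ (0, π/2) satisfy 1 = θ_max/sin²θ_max − cos θ_max/sin θ_max. Then for every t ∈ [a(1−a), (1−a²)/2] there exists a unique θ ∈ [0, θ_max] with A(θ) = t, where A(θ) = (1−a)²θ/(2 sin²θ) − (1−a)²/(2 tan θ) + a(1−a) (with A(0) = a(1−a)). -/
/-!
On `[0, θmax]` we have `A = (1 - a)² g + a(1 - a)` with `g θ = (θ - sin θ cos θ) / (2 sin² θ)`.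
The squeeze `0 ≤ g θ ≤ θ` makes `g` continuous at `0`, its derivative
`(sin θ - θ cos θ) / sin³ θ` is positive on `(0, π)`, and the defining equation of `θmax` says
exactly `g θmax = 1/2`. So `A` increases continuously from `a(1 - a)` to `(1 - a²)/2`, and the
intermediate value theorem gives existence while strict monotonicity gives uniqueness.
-/

open Real Set Filter Topology

noncomputable def segmentRatio (θ : ℝ) : ℝ :=
  if θ = 0 then 0 else (θ - sin θ * cos θ) / (2 * sin θ ^ 2)

@[simp] lemma segmentRatio_zero : segmentRatio 0 = 0 := if_pos rfl

lemma segmentRatio_of_ne_zero {θ : ℝ} (h : θ ≠ 0) :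
    segmentRatio θ = (θ - sin θ * cos θ) / (2 * sin θ ^ 2) := if_neg h

lemma segmentRatio_eq_div_sub_div_tan {θ : ℝ} (h : sin θ ≠ 0) :
    segmentRatio θ = θ / (2 * sin θ ^ 2) - 1 / (2 * tan θ) := by
  have hθ : θ ≠ 0 := by rintro rfl; simp at h
  rw [segmentRatio_of_ne_zero hθ, tan_eq_sin_div_cos, one_div, mul_div_assoc', inv_div]
  field_simp

lemma segmentRatio_mem_Icc {θ : ℝ} (hθ : θ ∈ Icc 0 (π / 2)) : segmentRatio θ ∈ Icc 0 θ := by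
  rcases hθ.1.eq_or_lt with rfl | hpos
  · simp
  -- The numerator `(2θ - sin 2θ) / 2` lies in `[0, 2θ³/3]`, and `sin θ ≥ 2θ/π` with `π² < 12`.
  have h2θ : 0 < 2 * θ := by linarith
  have hsin_two_mul : sin (2 * θ) = 2 * sin θ * cos θ := sin_two_mul θ
  have hsin_two_mul_lt := sin_lt h2θ
  have hsin_two_mul_gt := sin_gt_sub_cube h2θ
  have hsin : 2 / π * θ ≤ sin θ := mul_le_sin hθ.1 hθ.2
  have hsin_sq : 4 / π ^ 2 * θ ^ 2 ≤ sin θ ^ 2 :=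
    calc 4 / π ^ 2 * θ ^ 2 = (2 / π * θ) ^ 2 := by ring
      _ ≤ sin θ ^ 2 := pow_le_pow_left₀ (by positivity) hsin 2
  have hπ_sq : 1 / 3 < 4 / π ^ 2 := by
    rw [lt_div_iff₀ (by positivity)]; nlinarith [pi_lt_d2, pi_pos]
  rw [segmentRatio_of_ne_zero hpos.ne']
  constructor
  · apply div_nonneg <;> nlinarith
  · rw [div_le_iff₀ (by nlinarith)]
    nlinarith [pow_pos hpos 3]

lemma continuousWithinAt_segmentRatio_zero : ContinuousWithinAt segmentRatio (Ici 0) 0 := by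
  have hπ : (0 : ℝ) < π / 2 := by positivity
  have hbound : ∀ᶠ θ in 𝓝[≥] (0 : ℝ), segmentRatio θ ∈ Icc 0 θ := by
    filter_upwards [Icc_mem_nhdsGE hπ] with θ hθ using segmentRatio_mem_Icc hθ
  rw [ContinuousWithinAt, segmentRatio_zero]
  exact tendsto_of_tendsto_of_tendsto_of_le_of_le' tendsto_const_nhds
    (tendsto_nhdsWithin_of_tendsto_nhds tendsto_id) (hbound.mono fun _ h => h.1)
    (hbound.mono fun _ h => h.2)

lemma hasDerivAt_segmentRatio {x : ℝ} (h : sin x ≠ 0) :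
    HasDerivAt segmentRatio ((sin x - x * cos x) / sin x ^ 3) x := by
  have hx : x ≠ 0 := by rintro rfl; simp at h
  have hnum := (hasDerivAt_id' x).sub ((hasDerivAt_sin x).mul (hasDerivAt_cos x))
  have hden := ((hasDerivAt_sin x).pow 2).const_mul 2
  have heq : (fun θ => (θ - sin θ * cos θ) / (2 * sin θ ^ 2)) =ᶠ[𝓝 x] segmentRatio := by
    filter_upwards [eventually_ne_nhds hx] with θ hθ using (segmentRatio_of_ne_zero hθ).symm
  refine ((hnum.div hden (mul_ne_zero two_ne_zero (pow_ne_zero 2 h))).congr_of_eventuallyEq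
    heq.symm).congr_deriv ?_
  simp only [Pi.sub_apply, Pi.mul_apply, Pi.pow_apply]
  field_simp
  norm_num
  linear_combination sin x ^ 2 * sin_sq_add_cos_sq x

lemma sin_sub_mul_cos_pos {x : ℝ} (h0 : 0 < x) (hπ : x < π) : 0 < sin x - x * cos x := by
  have hs := sin_pos_of_pos_of_lt_pi h0 hπ
  rcases lt_or_ge x (π / 2) with hx | hx
  · have hc := cos_pos_of_mem_Ioo ⟨by linarith, hx⟩
    have := lt_tan h0 hx
    rw [tan_eq_sin_div_cos, lt_div_iff₀ hc] at this
    linarith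
  · have hc := cos_nonpos_of_pi_div_two_le_of_le hx (by linarith)
    nlinarith

lemma continuousOn_segmentRatio : ContinuousOn segmentRatio (Ico 0 π) := by
  intro x hx
  rcases hx.1.eq_or_lt with rfl | hpos
  · exact continuousWithinAt_segmentRatio_zero.mono fun _ h => h.1
  · have hs := sin_pos_of_pos_of_lt_pi hpos hx.2
    exact (hasDerivAt_segmentRatio hs.ne').continuousAt.continuousWithinAt

lemma strictMonoOn_segmentRatio : StrictMonoOn segmentRatio (Ico 0 π) := by
  refine strictMonoOn_of_deriv_pos (convex_Ico 0 π) continuousOn_segmentRatio fun x hx => ?_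
  rw [interior_Ico] at hx
  have hs := sin_pos_of_pos_of_lt_pi hx.1 hx.2
  rw [(hasDerivAt_segmentRatio hs.ne').deriv]
  exact div_pos (sin_sub_mul_cos_pos hx.1 hx.2) (by positivity)

lemma segmentRatio_eq_half {θ : ℝ} (h : sin θ ≠ 0)
    (hθ : 1 = θ / sin θ ^ 2 - cos θ / sin θ) : segmentRatio θ = 1 / 2 := by
  have hθ0 : θ ≠ 0 := by rintro rfl; simp at h
  rw [segmentRatio_of_ne_zero hθ0]
  field_simp at hθ ⊢
  linear_combination -hθ

lemma StrictMonoOn.existsUnique_eq_of_continuousOn {f : ℝ → ℝ} {a b t : ℝ} (hab : a ≤ b)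
    (hmono : StrictMonoOn f (Icc a b)) (hcont : ContinuousOn f (Icc a b))
    (ht : t ∈ Icc (f a) (f b)) : ∃! x, x ∈ Icc a b ∧ f x = t := by
  obtain ⟨x, hx, rfl⟩ := intermediate_value_Icc hab hcont ht
  exact ⟨x, ⟨hx, rfl⟩, fun y ⟨hy, hfy⟩ => hmono.injOn hy hx hfy⟩

theorem stmt_6 (a : ℝ) (ha : a ∈ Set.Ico (0:ℝ) 1)
    (θmax : ℝ) (hθ : θmax ∈ Set.Ioo 0 (π/2))
    (hmax : 1 = θmax / (Real.sin θmax)^2 - Real.cos θmax / Real.sin θmax)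
    (A : ℝ → ℝ)
    (hA0 : A 0 = a * (1 - a))
    (hA : ∀ θ ∈ Set.Ioo 0 (π/2),
      A θ = (1-a)^2 * θ / (2 * (Real.sin θ)^2) - (1-a)^2 / (2 * Real.tan θ) + a * (1-a)) :
    ∀ t ∈ Set.Icc (a * (1-a)) ((1 - a^2)/2),
      ∃! θ : ℝ, θ ∈ Set.Icc 0 θmax ∧ A θ = t := by
  intro t ht
  have hsub : Icc 0 θmax ⊆ Ico 0 π := Icc_subset_Ico_right (by linarith [hθ.2, pi_pos])
  have hA_eq : EqOn A (fun θ => (1 - a) ^ 2 * segmentRatio θ + a * (1 - a)) (Icc 0 θmax) := by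
    intro θ hθm
    rcases hθm.1.eq_or_lt with rfl | hpos
    · simp [hA0]
    · dsimp only
      have hs := sin_pos_of_pos_of_lt_pi hpos (hsub hθm).2
      rw [hA θ ⟨hpos, hθm.2.trans_lt hθ.2⟩, segmentRatio_eq_div_sub_div_tan hs.ne']
      ring
  have hpos : 0 < (1 - a) ^ 2 := pow_pos (sub_pos.2 ha.2) 2
  have hmono : StrictMonoOn A (Icc 0 θmax) := fun x hx y hy hxy => by
    rw [hA_eq hx, hA_eq hy]
    exact add_lt_add_left (mul_lt_mul_of_pos_left
      (strictMonoOn_segmentRatio (hsub hx) (hsub hy) hxy) hpos) _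
  have hcont : ContinuousOn A (Icc 0 θmax) :=
    (continuousOn_const.mul (continuousOn_segmentRatio.mono hsub)).add continuousOn_const
      |>.congr hA_eq
  have hAmax : A θmax = (1 - a ^ 2) / 2 := by
    have hs := sin_pos_of_pos_of_lt_pi hθ.1 (hsub ⟨hθ.1.le, le_rfl⟩).2
    rw [hA_eq ⟨hθ.1.le, le_rfl⟩]
    dsimp only
    rw [segmentRatio_eq_half hs.ne' hmax]
    ring
  refine hmono.existsUnique_eq_of_continuousOn hθ.1.le hcont ?_
  rwa [hA0, hAmax]
end

section
/- Let θ_max ∈ (0, π/2) satisfy 1 = θ_max/sin²θ_max − cos θ_max/sin θ_max. Then θ_max > π/4, and consequently θ_max/sin θ_max < √2. Hence for every a ∈ [0,1) and θ ∈ (0, θ_max], the perimeter P(S₄(a,θ)) = (1−a)θ/sin θ is strictly less than √2(1−a). -/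
/-!
Clearing denominators, the defining equation of θ_max reads
θ_max / sin θ_max = sin θ_max + cos θ_max. The function sin²x + sin x cos x − x vanishes at 0 and
has derivative 2 sin x (cos x − sin x) > 0 on (0, π/4), so it is positive on (0, π/4]; hence
θ_max > π/4. Then sin θ_max ≠ cos θ_max, and (sin + cos)² = 1 + 2 sin cos < 2 gives
θ_max / sin θ_max < √2. Finally x / sin x is increasing on (0, π) by strict concavity of sin.
-/

open Real

lemma sin_lt_cos_of_lt_pi_div_four_s10 {x : ℝ} (hx₀ : 0 ≤ x) (hx : x < π / 4) : sin x < cos x := by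
  rw [← sin_pi_div_two_sub]
  exact sin_lt_sin_of_lt_of_le_pi_div_two (by linarith [pi_pos]) (by linarith) (by linarith)

lemma cos_lt_sin_of_pi_div_four_lt_s10 {x : ℝ} (hx : π / 4 < x) (hx₁ : x ≤ π / 2) : cos x < sin x := by
  rw [← sin_pi_div_two_sub]
  exact sin_lt_sin_of_lt_of_le_pi_div_two (by linarith [pi_pos]) hx₁ (by linarith)

lemma strictMonoOn_sin_sq_add_sin_mul_cos_sub :
    StrictMonoOn (fun x ↦ sin x ^ 2 + sin x * cos x - x) (Set.Icc 0 (π / 4)) := by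
  have hderiv (x : ℝ) : HasDerivAt (fun x ↦ sin x ^ 2 + sin x * cos x - x)
      (2 * sin x * (cos x - sin x)) x := by
    refine ((((hasDerivAt_sin x).pow 2).add ((hasDerivAt_sin x).mul (hasDerivAt_cos x))).sub
      (hasDerivAt_id x)).congr_deriv ?_
    linear_combination sin_sq_add_cos_sq x
  refine strictMonoOn_of_deriv_pos (convex_Icc 0 (π / 4))
    (fun x _ ↦ (hderiv x).continuousAt.continuousWithinAt) fun x hx ↦ ?_
  rw [interior_Icc] at hx
  rw [(hderiv x).deriv]
  have hsin : 0 < sin x := sin_pos_of_pos_of_lt_pi hx.1 (by linarith [hx.2, pi_pos])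
  have := sin_lt_cos_of_lt_pi_div_four_s10 hx.1.le hx.2
  nlinarith

lemma lt_sin_sq_add_sin_mul_cos {x : ℝ} (hx₀ : 0 < x) (hx : x ≤ π / 4) :
    x < sin x ^ 2 + sin x * cos x := by
  have := strictMonoOn_sin_sq_add_sin_mul_cos_sub ⟨le_rfl, by positivity⟩ ⟨hx₀.le, hx⟩ hx₀
  simpa using this

lemma sin_add_cos_lt_sqrt_two {x : ℝ} (h : sin x ≠ cos x) : sin x + cos x < √2 := by
  refine lt_sqrt_of_sq_lt ?_
  nlinarith [sin_sq_add_cos_sq x, sq_pos_of_ne_zero (sub_ne_zero.2 h)]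

lemma div_sin_lt_div_sin {x y : ℝ} (hx : 0 < x) (hxy : x < y) (hy : y < π) :
    x / sin x < y / sin y := by
  have key := strictConcaveOn_sin_Icc.secant_strict_mono (a := 0) ⟨le_rfl, pi_pos.le⟩
    ⟨hx.le, by linarith⟩ ⟨by linarith, hy.le⟩ hx.ne' (by linarith) hxy
  simp only [sin_zero, sub_zero] at key
  have hsx : 0 < sin x := sin_pos_of_pos_of_lt_pi hx (by linarith)
  have hsy : 0 < sin y := sin_pos_of_pos_of_lt_pi (by linarith) hy
  rw [← inv_div, ← inv_div (sin y)]
  exact inv_strictAnti₀ (div_pos hsy (by linarith)) key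

theorem stmt_10 (θmax : ℝ) (hθ : θmax ∈ Set.Ioo 0 (π/2))
    (hmax : 1 = θmax / (Real.sin θmax)^2 - Real.cos θmax / Real.sin θmax) :
    π/4 < θmax ∧ θmax / Real.sin θmax < Real.sqrt 2 ∧
    ∀ a ∈ Set.Ico (0:ℝ) 1, ∀ θ ∈ Set.Ioc 0 θmax,
      (1-a) * θ / Real.sin θ < Real.sqrt 2 * (1-a) := by
  obtain ⟨hθ₀, hθ₁⟩ := hθ
  have hsin : 0 < sin θmax := sin_pos_of_pos_of_lt_pi hθ₀ (by linarith [pi_pos])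
  have hdiv : θmax / sin θmax = sin θmax + cos θmax := by
    field_simp at hmax ⊢
    linear_combination -hmax
  have hπ4 : π / 4 < θmax := by
    by_contra! h
    linarith [lt_sin_sq_add_sin_mul_cos hθ₀ h, (div_eq_iff hsin.ne').1 hdiv]
  have hsqrt : θmax / sin θmax < √2 :=
    hdiv ▸ sin_add_cos_lt_sqrt_two (cos_lt_sin_of_pi_div_four_lt_s10 hπ4 hθ₁.le).ne'
  refine ⟨hπ4, hsqrt, fun a ⟨_, ha⟩ θ ⟨hθ0, hθθmax⟩ ↦ ?_⟩
  have hratio : θ / sin θ < √2 := by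
    rcases hθθmax.lt_or_eq with hlt | rfl
    · exact (div_sin_lt_div_sin hθ0 hlt (by linarith [pi_pos])).trans hsqrt
    · exact hsqrt
  rw [mul_div_assoc, mul_comm]
  exact mul_lt_mul_of_pos_right hratio (by linarith)
end

section
/- Suppose a circular arc of radius r subtends an angle θ ∈ [π/2, π] at its center, so that the enclosed circular-segment area is t = (1/2) r² θ − (1/2) r² cos θ sin θ and the arc length is P = r θ. Then P ≥ √(π t); equivalently θ² ≥ (π/2)θ − (π/2) cos θ sin θ for all θ ∈ [π/2, π]. -/
open Real

/- Since sin x ≤ x for x ≥ 0, taking x = 2θ - π gives -sin θ cos θ ≤ θ - π/2 on [π/2, ∞). Hence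
(π/2)θ - (π/2) cos θ sin θ ≤ πθ - π²/4 = θ² - (θ - π/2)² ≤ θ², and multiplying by r² and taking
square roots gives the bound on the arc length. -/

lemma neg_sin_mul_cos_le_sub_pi_div_two {θ : ℝ} (hθ : π / 2 ≤ θ) :
    -(sin θ * cos θ) ≤ θ - π / 2 := by
  have h := sin_le (x := 2 * θ - π) (by linarith)
  rw [sin_sub_pi, sin_two_mul] at h
  linarith

lemma pi_div_two_mul_sub_cos_mul_sin_le_sq {θ : ℝ} (hθ : π / 2 ≤ θ) :
    π / 2 * θ - π / 2 * cos θ * sin θ ≤ θ ^ 2 :=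
  calc π / 2 * θ - π / 2 * cos θ * sin θ
      ≤ π / 2 * θ + π / 2 * (θ - π / 2) := by
        nlinarith [neg_sin_mul_cos_le_sub_pi_div_two hθ, pi_pos]
    _ ≤ θ ^ 2 := by nlinarith [sq_nonneg (θ - π / 2)]

theorem stmt_11 (r : ℝ) (hr : 0 < r) (θ : ℝ) (hθ : θ ∈ Set.Icc (π/2) π) :
    r * θ ≥ Real.sqrt (π * ((1/2) * r^2 * θ - (1/2) * r^2 * Real.cos θ * Real.sin θ)) ∧
    θ^2 ≥ (π/2) * θ - (π/2) * Real.cos θ * Real.sin θ := by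
  have key := pi_div_two_mul_sub_cos_mul_sin_le_sq hθ.1
  refine ⟨?_, key⟩
  have hθ_nonneg : 0 ≤ θ := by linarith [hθ.1, pi_pos]
  have h_area : π * ((1/2) * r^2 * θ - (1/2) * r^2 * cos θ * sin θ)
      = r ^ 2 * (π / 2 * θ - π / 2 * cos θ * sin θ) := by ring
  rw [ge_iff_le, sqrt_le_iff, h_area, mul_pow]
  exact ⟨by positivity, mul_le_mul_of_nonneg_left key (sq_nonneg r)⟩
end

section
/- Fix a ∈ [0,1) and define j(θ) = (1/(1−a))(P(θ)² − π A(θ)) where P(θ) = (1−a)θ/sin θ and A(θ) = (1−a)²θ/(2 sin²θ) − (1−a)²/(2 tan θ) + a(1−a). Then dj/dθ = (1−a)(π − 2θ)(θ cot θ − 1) csc²θ, which is nonzero for all θ ∈ (0, π/2) with θ ≠ π/2; in particular, restricted to (0, π/2), j is strictly monotone (strictly decreasing). -/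
/-!
Expanding `P` and `A`, `j θ = (1 - a) ((θ² - πθ/2) / sin² θ + (π/2) cot θ) - πa`,
whose derivative factors as `(1 - a)(π - 2θ)(θ cot θ - 1) / sin² θ`. On `(0, π/2)` the first two
factors are positive, while `θ cot θ < 1` is `θ < tan θ`; so the derivative is negative.
-/

open Real Set

lemma Real.mul_cos_div_sin_lt_one {θ : ℝ} (h0 : 0 < θ) (h1 : θ < π / 2) :
    θ * (cos θ / sin θ) < 1 := by
  have hs : 0 < sin θ := sin_pos_of_pos_of_lt_pi h0 (by linarith [pi_pos])
  have hc : 0 < cos θ := cos_pos_of_mem_Ioo ⟨by linarith, h1⟩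
  have htan : θ < sin θ / cos θ := tan_eq_sin_div_cos θ ▸ lt_tan h0 h1
  rw [lt_div_iff₀ hc] at htan
  rwa [← mul_div_assoc, div_lt_one hs]

lemma Real.hasDerivAt_cos_div_sin {θ : ℝ} (hs : sin θ ≠ 0) :
    HasDerivAt (fun x => cos x / sin x) (-1 / sin θ ^ 2) θ := by
  refine ((hasDerivAt_cos θ).div (hasDerivAt_sin θ) hs).congr_deriv ?_
  rw [← sin_sq_add_cos_sq θ]
  ring

noncomputable def notchedSquareDeficit (a θ : ℝ) : ℝ :=
  (1 - a) * ((θ ^ 2 - π * θ / 2) / sin θ ^ 2 + π / 2 * (cos θ / sin θ)) - π * a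

lemma hasDerivAt_notchedSquareDeficit (a : ℝ) {θ : ℝ} (hs : sin θ ≠ 0) :
    HasDerivAt (notchedSquareDeficit a)
      ((1 - a) * (π - 2 * θ) * (θ * (cos θ / sin θ) - 1) * (1 / sin θ) ^ 2) θ := by
  have hpoly : HasDerivAt (fun x => x ^ 2 - π * x / 2) (2 * θ - π / 2) θ := by
    refine ((hasDerivAt_pow 2 θ).sub (((hasDerivAt_id θ).const_mul π).div_const 2)).congr_deriv ?_
    ring
  have hsin_sq : HasDerivAt (fun x => sin x ^ 2) (2 * sin θ * cos θ) θ := by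
    refine ((hasDerivAt_sin θ).fun_pow 2).congr_deriv ?_
    ring
  have hsum := (((hpoly.div hsin_sq (pow_ne_zero 2 hs)).add
    ((hasDerivAt_cos_div_sin hs).const_mul (π / 2))).const_mul (1 - a)).sub_const (π * a)
  refine hsum.congr_deriv ?_
  field_simp
  ring

lemma notchedSquareDeficit_deriv_neg {a θ : ℝ} (ha : a < 1) (hθ : θ ∈ Ioo 0 (π / 2)) :
    (1 - a) * (π - 2 * θ) * (θ * (cos θ / sin θ) - 1) * (1 / sin θ) ^ 2 < 0 := by
  have hs : 0 < sin θ := sin_pos_of_pos_of_lt_pi hθ.1 (by linarith [hθ.2, pi_pos])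
  have hcot := mul_cos_div_sin_lt_one hθ.1 hθ.2
  have hfac : 0 < (1 - a) * (π - 2 * θ) := mul_pos (by linarith) (by linarith [hθ.2])
  exact mul_neg_of_neg_of_pos (mul_neg_of_pos_of_neg hfac (by linarith)) (by positivity)

theorem stmt_16 (a : ℝ) (ha : a ∈ Set.Ico (0:ℝ) 1) (P A j : ℝ → ℝ)
    (hP : ∀ θ ∈ Set.Ioo 0 (π/2), P θ = (1-a) * θ / Real.sin θ)
    (hA : ∀ θ ∈ Set.Ioo 0 (π/2),
      A θ = (1-a)^2 * θ / (2 * (Real.sin θ)^2) - (1-a)^2 / (2 * Real.tan θ) + a * (1-a))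
    (hj : ∀ θ ∈ Set.Ioo 0 (π/2), j θ = (1/(1-a)) * ((P θ)^2 - π * A θ)) :
    (∀ θ ∈ Set.Ioo 0 (π/2),
      deriv j θ =
        (1-a) * (π - 2*θ) * (θ * (Real.cos θ / Real.sin θ) - 1) * (1 / Real.sin θ)^2 ∧
      (θ ≠ π/2 → deriv j θ ≠ 0)) ∧
    StrictAntiOn j (Set.Ioo 0 (π/2)) := by
  have hsin : ∀ θ ∈ Ioo 0 (π / 2), sin θ ≠ 0 := fun θ hθ =>
    (sin_pos_of_pos_of_lt_pi hθ.1 (by linarith [hθ.2, pi_pos])).ne'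
  have hj_eq : EqOn j (notchedSquareDeficit a) (Ioo 0 (π / 2)) := by
    intro θ hθ
    have hs := hsin θ hθ
    have hc : cos θ ≠ 0 := (cos_pos_of_mem_Ioo ⟨by linarith [hθ.1, pi_pos], hθ.2⟩).ne'
    have h1a : 1 - a ≠ 0 := by linarith [ha.2]
    rw [hj θ hθ, hP θ hθ, hA θ hθ, tan_eq_sin_div_cos, notchedSquareDeficit]
    field_simp
    ring
  have hderiv : ∀ θ ∈ Ioo 0 (π / 2), HasDerivAt j
      ((1 - a) * (π - 2 * θ) * (θ * (cos θ / sin θ) - 1) * (1 / sin θ) ^ 2) θ := fun θ hθ =>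
    (hasDerivAt_notchedSquareDeficit a (hsin θ hθ)).congr_of_eventuallyEq
      (Filter.eventuallyEq_of_mem (isOpen_Ioo.mem_nhds hθ) hj_eq)
  refine ⟨fun θ hθ => ⟨(hderiv θ hθ).deriv, fun _ => ?_⟩, ?_⟩
  · rw [(hderiv θ hθ).deriv]
    exact (notchedSquareDeficit_deriv_neg ha.2 hθ).ne
  · refine strictAntiOn_of_deriv_neg (convex_Ioo _ _)
      (fun x hx => (hderiv x hx).continuousAt.continuousWithinAt) fun x hx => ?_
    rw [interior_Ioo] at hx
    rw [(hderiv x hx).deriv]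
    exact notchedSquareDeficit_deriv_neg ha.2 hx
end
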